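/- arXiv:2503.12711 — 2 statements merged into one kernel-verified Lean document; each statement's English description precedes it below -/
import Mathlib

section
/- For a unit quaternion q with pure part q_v ≠ 0 and v ∈ T_qQ, the differential of the quaternion logarithm is d log_q(v) = [ (−1/(‖q_v‖₂√(1−q₀²)))q_v , (arccos(q₀)/‖q_v‖₂)(I₃ − q_v q_vᵀ/‖q_v‖₂²) ] v, i.e., d log_q(v) = (−v₀/(‖q_v‖₂√(1−q₀²)))q_v + (arccos(q₀)/‖q_v‖₂)(v_v − (q_vᵀv_v/‖q_v‖₂²)q_v) where v = (v₀, v_v). -/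
open Quaternion Real
open scoped RealInnerProductSpace

/-- The quaternion exponential exp(ω) = (cos‖ω‖, (sin‖ω‖/‖ω‖)·ω) (Lean division-by-zero
conventions give qexp 0 = (1,0), matching the convention sinc(0) = 1). -/
noncomputable def qexp (ω : EuclideanSpace ℝ (Fin 3)) : ℍ[ℝ] :=
  ⟨Real.cos ‖ω‖, (Real.sin ‖ω‖ / ‖ω‖) * ω 0,
    (Real.sin ‖ω‖ / ‖ω‖) * ω 1, (Real.sin ‖ω‖ / ‖ω‖) * ω 2⟩

/-- The pure (imaginary) part of a quaternion, as a vector in ℝ³. -/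
noncomputable def imVec (q : ℍ[ℝ]) : EuclideanSpace ℝ (Fin 3) :=
  (WithLp.equiv 2 (Fin 3 → ℝ)).symm ![q.imI, q.imJ, q.imK]

/-- The quaternion logarithm log(q) = (arccos(q₀)/‖q_v‖)·q_v. -/
noncomputable def qlog (q : ℍ[ℝ]) : EuclideanSpace ℝ (Fin 3) :=
  (Real.arccos q.re / ‖imVec q‖) • imVec q

/-- A vector ω ∈ ℝ³ viewed as a pure quaternion. -/
noncomputable def pureQuat (x : EuclideanSpace ℝ (Fin 3)) : ℍ[ℝ] := ⟨0, x 0, x 1, x 2⟩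

noncomputable def imVecL : ℍ[ℝ] →L[ℝ] EuclideanSpace ℝ (Fin 3) :=
  LinearMap.toContinuousLinearMap
    { toFun := imVec
      map_add' := by intro a b; ext i; fin_cases i <;> simp [imVec]
      map_smul' := by intro c a; ext i; fin_cases i <;> simp [imVec] }

noncomputable def reL : ℍ[ℝ] →L[ℝ] ℝ :=
  LinearMap.toContinuousLinearMap
    { toFun := fun q => q.re
      map_add' := by intro a b; simp
      map_smul' := by intro c a; simp }

theorem hasDerivAt_norm_aux {F : Type*} [NormedAddCommGroup F] [InnerProductSpace ℝ F]
    {f : ℝ → F} {f' : F} {x : ℝ} (hf : HasDerivAt f f' x) (h0 : f x ≠ 0) :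
    HasDerivAt (fun t => ‖f t‖) (⟪f x, f'⟫ / ‖f x‖) x := by
  have h1 : HasDerivAt (fun t => ‖f t‖ ^ 2) (2 * ⟪f x, f'⟫) x := hf.norm_sq
  have hne : (‖f x‖ ^ 2 : ℝ) ≠ 0 := pow_ne_zero _ (norm_ne_zero_iff.2 h0)
  have h2 := (Real.hasDerivAt_sqrt hne).comp x h1
  simp only [Function.comp_def, Real.sqrt_sq (norm_nonneg _)] at h2
  refine h2.congr_deriv ?_
  have hn : ‖f x‖ ≠ 0 := norm_ne_zero_iff.2 h0
  field_simp

/-- For a unit quaternion q with pure part q_v ≠ 0 (and −1 < q₀ < 1), and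
v ∈ T_qQ, the differential of the quaternion logarithm, computed along any smooth unit
curve γ through q with velocity v, is
d log_q(v) = (−v₀/(‖q_v‖√(1−q₀²))) q_v + (arccos(q₀)/‖q_v‖)(v_v − (q_vᵀv_v/‖q_v‖²) q_v). -/
theorem differential_qlog (q v : ℍ[ℝ]) (hq : ‖q‖ = 1) (hqv : imVec q ≠ 0)
    (hre₁ : -1 < q.re) (hre₂ : q.re < 1) (hv : ⟪v, q⟫ = 0)
    (γ : ℝ → ℍ[ℝ]) (hγ : ContDiff ℝ (⊤ : ℕ∞) γ) (hγ1 : ∀ t, ‖γ t‖ = 1)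
    (hγ0 : γ 0 = q) (hγ' : deriv γ 0 = v) :
    deriv (fun t => qlog (γ t)) 0
      = (-v.re / (‖imVec q‖ * Real.sqrt (1 - q.re ^ 2))) • imVec q
        + (Real.arccos q.re / ‖imVec q‖) •
            (imVec v - (⟪imVec q, imVec v⟫ / ‖imVec q‖ ^ 2) • imVec q) := by
  set n : ℝ := ‖imVec q‖ with hn
  set s : ℝ := Real.sqrt (1 - q.re ^ 2) with hs
  set a : ℝ := Real.arccos q.re with ha
  set i : ℝ := ⟪imVec q, imVec v⟫ with hi
  have hn0 : n ≠ 0 := norm_ne_zero_iff.2 hqv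
  have hs0 : s ≠ 0 := by
    have : (0:ℝ) < 1 - q.re ^ 2 := by nlinarith
    positivity
  have hγd : HasDerivAt γ v 0 := by
    have := (hγ.differentiable (by simp) 0).hasDerivAt
    rwa [hγ'] at this
  have hw : HasDerivAt (fun t => imVec (γ t)) (imVec v) 0 :=
    imVecL.hasFDerivAt.comp_hasDerivAt 0 hγd
  have hr : HasDerivAt (fun t => (γ t).re) v.re 0 :=
    reL.hasFDerivAt.comp_hasDerivAt 0 hγd
  have hnorm : HasDerivAt (fun t => ‖imVec (γ t)‖) (i / n) 0 := by
    have := hasDerivAt_norm_aux hw (by rw [hγ0]; exact hqv)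
    rwa [hγ0] at this
  have harc : HasDerivAt (fun t => Real.arccos ((γ t).re)) (-(1 / s) * v.re) 0 := by
    have h1 : HasDerivAt Real.arccos (-(1 / s)) ((γ 0).re) := by
      rw [hγ0]; exact Real.hasDerivAt_arccos (ne_of_gt hre₁) (ne_of_lt hre₂)
    exact HasDerivAt.comp (h₂ := Real.arccos) (h := fun t => (γ t).re) 0 h1 hr
  have hc : HasDerivAt (fun t => Real.arccos ((γ t).re) / ‖imVec (γ t)‖)
      ((-(1 / s) * v.re * n - a * (i / n)) / n ^ 2) 0 := by
    have := harc.div hnorm (by rw [hγ0]; exact hn0)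
    rwa [hγ0] at this
  have htot := hc.smul hw
  rw [hγ0] at htot
  have hkey : deriv (fun t => qlog (γ t)) 0
      = ((-(1 / s) * v.re * n - a * (i / n)) / n ^ 2) • imVec q + (a / n) • imVec v := by
    have : (fun t => qlog (γ t))
        = fun t => (Real.arccos ((γ t).re) / ‖imVec (γ t)‖) • imVec (γ t) := rfl
    rw [this, (show HasDerivAt (fun t => (Real.arccos ((γ t).re) / ‖imVec (γ t)‖) • imVec (γ t)) _ 0 from htot).deriv, add_comm]
  rw [hkey, smul_sub, smul_smul]
  have hscal : (-(1 / s) * v.re * n - a * (i / n)) / n ^ 2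
      = -v.re / (n * s) - a / n * (i / n ^ 2) := by
    field_simp
  rw [hscal, sub_smul]
  abel
end

section
/- For ω ∈ ℝ³ with 0 < ‖ω‖₂ < π and η ∈ ℝ³, the differential of the quaternion exponential d exp_ω(η) has real part −sinc(ω)(ωᵀη) and pure part sinc(ω)η + (ωᵀη)∇sinc(ω), where ∇sinc(ω) = (cos‖ω‖₂/‖ω‖₂² − sin‖ω‖₂/‖ω‖₂³)ω. -/
open Quaternion Real
open scoped RealInnerProductSpace

/-- The gradient of sinc: ∇sinc(ω) = (cos‖ω‖/‖ω‖² − sin‖ω‖/‖ω‖³) ω. -/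
noncomputable def gradSinc (ω : EuclideanSpace ℝ (Fin 3)) : EuclideanSpace ℝ (Fin 3) :=
  (Real.cos ‖ω‖ / ‖ω‖ ^ 2 - Real.sin ‖ω‖ / ‖ω‖ ^ 3) • ω

lemma pureQuat_re (x : EuclideanSpace ℝ (Fin 3)) : (pureQuat x).re = 0 := rfl
lemma pureQuat_imI (x : EuclideanSpace ℝ (Fin 3)) : (pureQuat x).imI = x 0 := rfl
lemma pureQuat_imJ (x : EuclideanSpace ℝ (Fin 3)) : (pureQuat x).imJ = x 1 := rfl
lemma pureQuat_imK (x : EuclideanSpace ℝ (Fin 3)) : (pureQuat x).imK = x 2 := rfl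

noncomputable def pureQuatL : EuclideanSpace ℝ (Fin 3) →L[ℝ] ℍ[ℝ] :=
  LinearMap.toContinuousLinearMap
    { toFun := pureQuat
      map_add' := by
        intro x y
        ext <;> simp [pureQuat_re, pureQuat_imI, pureQuat_imJ, pureQuat_imK]
      map_smul' := by
        intro c x
        ext <;> simp [pureQuat_re, pureQuat_imI, pureQuat_imJ, pureQuat_imK] }

noncomputable def reQuatL : ℝ →L[ℝ] ℍ[ℝ] :=
  (ContinuousLinearMap.id ℝ ℝ).smulRight (1 : ℍ[ℝ])

lemma hasFDerivAt_norm_of_ne {x : EuclideanSpace ℝ (Fin 3)} (hx : x ≠ 0) :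
    HasFDerivAt (fun y : EuclideanSpace ℝ (Fin 3) => ‖y‖) (‖x‖⁻¹ • innerSL ℝ x) x := by
  have hsq : HasFDerivAt (fun y : EuclideanSpace ℝ (Fin 3) => ‖y‖ ^ 2)
      (2 • innerSL ℝ x) x := (hasStrictFDerivAt_norm_sq x).hasFDerivAt
  have hne : ‖x‖ ^ 2 ≠ 0 := pow_ne_zero 2 (norm_ne_zero_iff.mpr hx)
  have h := (Real.hasDerivAt_sqrt hne).comp_hasFDerivAt x hsq
  have hfun : (Real.sqrt ∘ fun y : EuclideanSpace ℝ (Fin 3) => ‖y‖ ^ 2)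
      = fun y : EuclideanSpace ℝ (Fin 3) => ‖y‖ := by
    funext y; simp [Function.comp, Real.sqrt_sq (norm_nonneg y)]
  rw [hfun] at h
  refine h.congr_fderiv ?_
  rw [Real.sqrt_sq (norm_nonneg x)]
  ext η
  simp [ContinuousLinearMap.smul_apply]
  ring


set_option maxHeartbeats 1000000 in
/-- For 0 < ‖ω‖ < π, the Fréchet derivative of the quaternion exponential at ω
sends η to the quaternion with real part −sinc(ω)(ωᵀη) and pure part
sinc(ω)η + (ωᵀη)∇sinc(ω). -/
theorem differential_qexp (ω : EuclideanSpace ℝ (Fin 3)) (h0 : 0 < ‖ω‖) (hπ : ‖ω‖ < Real.pi) :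
    ∃ f' : EuclideanSpace ℝ (Fin 3) →L[ℝ] ℍ[ℝ],
      HasFDerivAt qexp f' ω ∧
      ∀ η : EuclideanSpace ℝ (Fin 3),
        f' η = -((Real.sin ‖ω‖ / ‖ω‖) * ⟪ω, η⟫) +
          pureQuat ((Real.sin ‖ω‖ / ‖ω‖) • η + ⟪ω, η⟫ • gradSinc ω) := by
  have hr : ‖ω‖ ≠ 0 := h0.ne'
  have hω : ω ≠ 0 := by simpa using hr
  set N : EuclideanSpace ℝ (Fin 3) →L[ℝ] ℝ := ‖ω‖⁻¹ • innerSL ℝ ω with hN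
  have hnorm := hasFDerivAt_norm_of_ne hω
  -- cos ∘ norm
  have hcos : HasFDerivAt (fun x : EuclideanSpace ℝ (Fin 3) => Real.cos ‖x‖)
      ((-Real.sin ‖ω‖) • N) ω :=
    (Real.hasDerivAt_cos ‖ω‖).comp_hasFDerivAt ω hnorm
  -- sinc ∘ norm
  have hsinc : HasDerivAt (fun t : ℝ => Real.sin t / t)
      ((Real.cos ‖ω‖ * ‖ω‖ - Real.sin ‖ω‖ * 1) / ‖ω‖ ^ 2) ‖ω‖ :=
    (Real.hasDerivAt_sin ‖ω‖).div (hasDerivAt_id ‖ω‖) hr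
  have hs : HasFDerivAt (fun x : EuclideanSpace ℝ (Fin 3) => Real.sin ‖x‖ / ‖x‖)
      (((Real.cos ‖ω‖ * ‖ω‖ - Real.sin ‖ω‖ * 1) / ‖ω‖ ^ 2) • N) ω :=
    hsinc.comp_hasFDerivAt ω hnorm
  -- s(x) • x
  have hsmul : HasFDerivAt (fun x : EuclideanSpace ℝ (Fin 3) => (Real.sin ‖x‖ / ‖x‖) • x)
      ((Real.sin ‖ω‖ / ‖ω‖) • ContinuousLinearMap.id ℝ _ +
        ((((Real.cos ‖ω‖ * ‖ω‖ - Real.sin ‖ω‖ * 1) / ‖ω‖ ^ 2) • N).smulRight ω)) ω :=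
    hs.smul (hasFDerivAt_id ω)
  have hA := (reQuatL.hasFDerivAt.comp ω hcos)
  have hB := (pureQuatL.hasFDerivAt.comp ω hsmul)
  have hsum := hA.add hB
  refine ⟨reQuatL.comp ((-Real.sin ‖ω‖) • N) +
      pureQuatL.comp ((Real.sin ‖ω‖ / ‖ω‖) • ContinuousLinearMap.id ℝ _ +
        ((((Real.cos ‖ω‖ * ‖ω‖ - Real.sin ‖ω‖ * 1) / ‖ω‖ ^ 2) • N).smulRight ω)), ?_, ?_⟩
  · refine hsum.congr_of_eventuallyEq (Filter.Eventually.of_forall fun x => ?_)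
    ext <;> simp [qexp, reQuatL, pureQuatL, pureQuat_re, pureQuat_imI, pureQuat_imJ, pureQuat_imK, Quaternion.coe]
  · intro η
    have hNη : N η = ‖ω‖⁻¹ * ⟪ω, η⟫ := by simp [hN]
    have hc : (-((Real.sin ‖ω‖ / ‖ω‖) * ⟪ω, η⟫) : ℍ[ℝ])
        = ((-(Real.sin ‖ω‖ / ‖ω‖ * ⟪ω, η⟫) : ℝ) : ℍ[ℝ]) := by push_cast; ring
    have key : ∀ s a : ℝ,
        (Real.cos ‖ω‖ * ‖ω‖ - Real.sin ‖ω‖) / ‖ω‖ ^ 2 * (‖ω‖⁻¹ * s) * a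
          = s * ((Real.cos ‖ω‖ / ‖ω‖ ^ 2 - Real.sin ‖ω‖ / ‖ω‖ ^ 3) * a) := by
      intro s a
      field_simp
    rw [hc]
    ext
    · simp [reQuatL, pureQuatL, pureQuat_re, pureQuat_imI, pureQuat_imJ, pureQuat_imK, hNη, ← Quaternion.coe_div]
      ring
    · simp [reQuatL, pureQuatL, pureQuat_re, pureQuat_imI, pureQuat_imJ, pureQuat_imK, hNη, gradSinc, ← Quaternion.coe_div]
      exact key _ _
    · simp [reQuatL, pureQuatL, pureQuat_re, pureQuat_imI, pureQuat_imJ, pureQuat_imK, hNη, gradSinc, ← Quaternion.coe_div]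
      exact key _ _
    · simp [reQuatL, pureQuatL, pureQuat_re, pureQuat_imI, pureQuat_imJ, pureQuat_imK, hNη, gradSinc, ← Quaternion.coe_div]
      exact key _ _
end
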